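/- arXiv:1505.04125 — 3 statements merged into one kernel-verified Lean document; each statement's English description precedes it below -/
import Mathlib

section
/- For any graph G, any k ≥ 2 and any l ≥ 0, the composite ∂ ∘ ∂ : MC_{k,l}(G) → MC_{k-1,l}(G) → MC_{k-2,l}(G) of the magnitude differentials is the zero map; hence (MC_{*,l}(G), ∂) is a chain complex. -/
/-!
For a generator `x`, `∂ ∂ x` is the alternating sum of the double faces `∂_b ∂_a x` that pass
the length test twice. A face never increases the length, and a face of a generator that keeps
the length is again a generator. Hence the first test is redundant, and the terms cancel in pairs
through the simplicial identity `∂_b ∂_a = ∂_{b'} ∂_{a'}`, whose index swap reverses the sign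
`(-1)^(a+b)`.
-/

noncomputable section

namespace MagnitudeHomology

open Classical

variable {V : Type*} {W : Type*}

/-- The length `ℓ(x₀,…,x_k)` of a tuple of vertices: the sum of consecutive
(extended) shortest-path distances. -/
def tupleLen (G : SimpleGraph V) {k : ℕ} (x : Fin (k + 1) → V) : ℕ∞ :=
  ∑ i : Fin k, G.edist (x i.castSucc) (x i.succ)

/-- The condition defining the generators of `MC_{k,l}(G)`: consecutive entries
distinct and total length `l`. -/
def IsMagTuple (G : SimpleGraph V) (l : ℕ) {k : ℕ} (x : Fin (k + 1) → V) : Prop :=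
  (∀ i : Fin k, x i.castSucc ≠ x i.succ) ∧ tupleLen G x = (l : ℕ∞)

/-- The generating tuples of the magnitude chain group `MC_{k,l}(G)`. -/
def MagTuple (G : SimpleGraph V) (k l : ℕ) : Type _ :=
  {x : Fin (k + 1) → V // IsMagTuple G l x}

/-- The magnitude chain group `MC_{k,l}(G)`: the free abelian group on tuples
`(x₀,…,x_k)` with consecutive entries distinct and length `l`. -/
def MC (G : SimpleGraph V) (k l : ℕ) : Type _ :=
  FreeAbelianGroup (MagTuple G k l)

instance (G : SimpleGraph V) (k l : ℕ) : AddCommGroup (MC G k l) :=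
  inferInstanceAs (AddCommGroup (FreeAbelianGroup _))

/-- The generator of `MC_{k,l}(G)` corresponding to a tuple, or `0` if the tuple
does not satisfy the defining conditions. -/
def mcGen (G : SimpleGraph V) {k : ℕ} (l : ℕ) (x : Fin (k + 1) → V) : MC G k l :=
  if h : IsMagTuple G l x then FreeAbelianGroup.of (⟨x, h⟩ : MagTuple G k l) else 0

/-- The magnitude differential `∂ = ∑_{i=1}^{k} (-1)^i ∂_i : MC_{k+1,l}(G) → MC_{k,l}(G)`,
where `∂_i` omits the `i`-th entry if this preserves the length, and is `0` otherwise. -/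
def magDiff (G : SimpleGraph V) (k l : ℕ) : MC G (k + 1) l →+ MC G k l :=
  FreeAbelianGroup.lift fun (x : MagTuple G (k + 1) l) =>
    ∑ i : Fin k, ((-1 : ℤ) ^ ((i : ℕ) + 1)) •
      mcGen G l (x.1 ∘ Fin.succAbove i.succ.castSucc)

theorem _root_.Fin.succ_succAbove_eq_castSucc_succAbove {n : ℕ} {a j : Fin n} (h : j ≠ a) :
    a.succ.succAbove j = a.castSucc.succAbove j := by
  rcases h.lt_or_gt with h | h
  · rw [Fin.succAbove_of_castSucc_lt _ _ (Fin.castSucc_lt_succ_iff.2 h.le),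
      Fin.succAbove_of_castSucc_lt _ _ (Fin.castSucc_lt_castSucc_iff.2 h)]
  · rw [Fin.succAbove_of_le_castSucc _ _ (Fin.succ_le_castSucc_iff.2 h),
      Fin.succAbove_of_le_castSucc _ _ (Fin.castSucc_le_castSucc_iff.2 h.le)]

/-- `(a, b) ↦ (a.succAbove b, b.predAbove a)` is a sign-reversing involution. -/
theorem _root_.Fin.sum_sum_neg_one_pow_smul_eq_zero {M : Type*} [AddCommGroup M] {n : ℕ}
    (f : Fin (n + 1) → Fin n → M) (hf : ∀ a b, f (a.succAbove b) (b.predAbove a) = f a b) :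
    ∑ a : Fin (n + 1), ∑ b : Fin n, (-1 : ℤ) ^ ((a : ℕ) + b) • f a b = 0 := by
  rw [← Fintype.sum_prod_type']
  refine Finset.sum_ninvolution (fun p => (p.1.succAbove p.2, p.2.predAbove p.1)) ?_ ?_
    (fun _ => Finset.mem_univ _) ?_
  · rintro ⟨a, b⟩
    simp only [hf, Fin.neg_one_pow_succAbove_add_predAbove, neg_smul, add_neg_cancel]
  · rintro ⟨a, b⟩ - h
    exact Fin.succAbove_ne a b (congrArg Prod.fst h)
  · rintro ⟨a, b⟩
    simp only [Fin.succAbove_succAbove_predAbove, Fin.predAbove_predAbove_succAbove]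

/-- The face `∂_{i+1} x` of the paper: the entry `x (i + 1)` is omitted. -/
def innerFace {α : Type*} {n : ℕ} (x : Fin (n + 2) → α) (i : Fin n) : Fin (n + 1) → α :=
  x ∘ Fin.succAbove i.succ.castSucc

section innerFace

variable {α : Type*} {n : ℕ}

theorem innerFace_castSucc_self (x : Fin (n + 2) → α) (a : Fin n) :
    innerFace x a a.castSucc = x a.castSucc.castSucc := by
  simp [innerFace, Fin.succAbove_of_castSucc_lt]

theorem innerFace_succ_self (x : Fin (n + 2) → α) (a : Fin n) :
    innerFace x a a.succ = x a.succ.succ := by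
  simp [innerFace]

theorem innerFace_succ (x : Fin (n + 2) → α) (a j : Fin n) :
    innerFace x a j.succ = x (a.castSucc.succAbove j).succ := by
  simp [innerFace]

theorem innerFace_castSucc_of_ne (x : Fin (n + 2) → α) {a j : Fin n} (h : j ≠ a) :
    innerFace x a j.castSucc = x (a.castSucc.succAbove j).castSucc := by
  rw [innerFace, Function.comp_apply, Fin.castSucc_succAbove_castSucc,
    Fin.succ_succAbove_eq_castSucc_succAbove h]

theorem innerFace_innerFace_swap (x : Fin (n + 3) → α) (a : Fin (n + 1)) (b : Fin n) :
    innerFace (innerFace x (a.succAbove b)) (b.predAbove a) = innerFace (innerFace x a) b := by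
  have hsucc : a.succ.castSucc.succAbove b.succ.castSucc = (a.succAbove b).succ.castSucc := by
    rw [Fin.castSucc_succAbove_castSucc, Fin.succ_succAbove_succ]
  have hpred : b.succ.castSucc.predAbove a.succ.castSucc = (b.predAbove a).succ.castSucc := by
    rw [Fin.castSucc_predAbove_castSucc, Fin.succ_predAbove_succ]
  funext m
  simp only [innerFace, Function.comp_apply, ← hsucc, ← hpred,
    Fin.succAbove_succAbove_succAbove_predAbove]

end innerFace

section tupleLen

variable (G : SimpleGraph V) {n : ℕ}

theorem exists_tupleLen_eq_and_tupleLen_innerFace_eq (x : Fin (n + 2) → V) (a : Fin n) :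
    ∃ r, tupleLen G x = r + (G.edist (x a.castSucc.castSucc) (x a.succ.castSucc) +
        G.edist (x a.succ.castSucc) (x a.succ.succ)) ∧
      tupleLen G (innerFace x a) = r + G.edist (x a.castSucc.castSucc) (x a.succ.succ) := by
  let e : Fin (n + 1) → ℕ∞ := fun m => G.edist (x m.castSucc) (x m.succ)
  refine ⟨∑ j ∈ Finset.univ.erase a, e (a.castSucc.succAbove j), ?_, ?_⟩
  · rw [tupleLen, Fin.sum_univ_succAbove _ a.castSucc,
      ← Finset.add_sum_erase _ _ (Finset.mem_univ a)]
    simp only [Fin.succAbove_castSucc_self, Fin.castSucc_succ, e]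
    ring
  · rw [tupleLen, ← Finset.add_sum_erase _ _ (Finset.mem_univ a), innerFace_castSucc_self,
      innerFace_succ_self, add_comm]
    congr 1
    refine Finset.sum_congr rfl fun j hj => ?_
    rw [innerFace_castSucc_of_ne _ (Finset.ne_of_mem_erase hj), innerFace_succ]

theorem tupleLen_innerFace_le (x : Fin (n + 2) → V) (a : Fin n) :
    tupleLen G (innerFace x a) ≤ tupleLen G x := by
  obtain ⟨r, hx, hface⟩ := exists_tupleLen_eq_and_tupleLen_innerFace_eq G x a
  rw [hx, hface]
  gcongr
  exact SimpleGraph.edist_triangle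

/-- Were `x a = x (a + 2)`, omitting `x (a + 1)` would shorten `x` by a positive amount. -/
theorem ne_of_tupleLen_innerFace_eq {l : ℕ} {x : Fin (n + 2) → V} (hx : IsMagTuple G l x)
    {a : Fin n} (hl : tupleLen G (innerFace x a) = l) :
    x a.castSucc.castSucc ≠ x a.succ.succ := by
  intro hend
  obtain ⟨r, hxr, hface⟩ := exists_tupleLen_eq_and_tupleLen_innerFace_eq G x a
  rw [hl, hend, SimpleGraph.edist_self, add_zero] at hface
  rw [hx.2, ← hface] at hxr
  have hsteps := (WithTop.add_left_inj (ENat.natCast_ne_top l)).1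
    (hxr.symm.trans (add_zero _).symm)
  have hstep := hx.1 a.castSucc
  rw [← Fin.castSucc_succ] at hstep
  exact hstep (SimpleGraph.edist_eq_zero_iff.1 (add_eq_zero.1 hsteps).1)

theorem isMagTuple_innerFace_or_tupleLen_lt {l : ℕ} {x : Fin (n + 2) → V}
    (hx : IsMagTuple G l x) (a : Fin n) :
    IsMagTuple G l (innerFace x a) ∨ tupleLen G (innerFace x a) < l := by
  refine or_iff_not_imp_right.2 fun hlt => ?_
  have hl : tupleLen G (innerFace x a) = l :=
    ((tupleLen_innerFace_le G x a).trans_eq hx.2).eq_of_not_lt hlt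
  refine ⟨fun j => ?_, hl⟩
  by_cases hj : j = a
  · subst hj
    rw [innerFace_castSucc_self, innerFace_succ_self]
    exact ne_of_tupleLen_innerFace_eq G hx hl
  · rw [innerFace_castSucc_of_ne _ hj, innerFace_succ]
    exact hx.1 _

end tupleLen

section magDiff

variable (G : SimpleGraph V) {k l : ℕ}

def MC.of (x : MagTuple G k l) : MC G k l :=
  FreeAbelianGroup.of x

@[ext]
theorem MC.hom_ext {A : Type*} [AddCommGroup A] {f g : MC G k l →+ A}
    (h : ∀ x : MagTuple G k l, f (MC.of G x) = g (MC.of G x)) : f = g :=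
  FreeAbelianGroup.lift_ext f g h

theorem mcGen_of_isMagTuple {y : Fin (k + 1) → V} (hy : IsMagTuple G l y) :
    mcGen G l y = MC.of G (⟨y, hy⟩ : MagTuple G k l) :=
  dif_pos hy

theorem mcGen_of_not_isMagTuple {y : Fin (k + 1) → V} (hy : ¬IsMagTuple G l y) :
    mcGen G l y = 0 :=
  dif_neg hy

theorem magDiff_of (x : MagTuple G (k + 1) l) :
    magDiff G k l (MC.of G x) =
      ∑ i : Fin k, (-1 : ℤ) ^ ((i : ℕ) + 1) • mcGen G l (innerFace x.1 i) :=
  FreeAbelianGroup.lift_apply_of _ _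

theorem mcGen_innerFace_of_tupleLen_lt {y : Fin (k + 2) → V} (hy : tupleLen G y < l)
    (j : Fin k) : mcGen G l (innerFace y j) = 0 :=
  mcGen_of_not_isMagTuple G fun h => ((tupleLen_innerFace_le G y j).trans_lt hy).ne h.2

/-- If `y` is too short, both sides vanish because faces do not increase the length. -/
theorem magDiff_mcGen {y : Fin (k + 2) → V} (hy : IsMagTuple G l y ∨ tupleLen G y < l) :
    magDiff G k l (mcGen G l y) =
      ∑ j : Fin k, (-1 : ℤ) ^ ((j : ℕ) + 1) • mcGen G l (innerFace y j) := by
  rcases hy with hy | hy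
  · rw [mcGen_of_isMagTuple G hy]
    exact magDiff_of G _
  · rw [mcGen_of_not_isMagTuple G fun h => hy.ne h.2, map_zero]
    simp only [mcGen_innerFace_of_tupleLen_lt G hy, smul_zero, Finset.sum_const_zero]

end magDiff

theorem magDiff_comp_magDiff_general {V : Type*} (G : SimpleGraph V) (k l : ℕ) :
    (magDiff G k l).comp (magDiff G (k + 1) l) = 0 := by
  ext x
  have hsign : ∀ a b : ℕ, (-1 : ℤ) ^ (a + 1 + (b + 1)) = (-1) ^ (a + b) := fun a b => by ring
  simp only [AddMonoidHom.comp_apply, magDiff_of, map_sum, map_zsmul,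
    magDiff_mcGen G (isMagTuple_innerFace_or_tupleLen_lt G x.2 _), Finset.smul_sum, smul_smul,
    ← pow_add, hsign, AddMonoidHom.zero_apply]
  exact Fin.sum_sum_neg_one_pow_smul_eq_zero _ fun a b => by rw [innerFace_innerFace_swap]

/-- For any (finite simple) graph `G`, the composite of two
consecutive magnitude differentials `∂ ∘ ∂ : MC_{k+2,l}(G) → MC_{k+1,l}(G) → MC_{k,l}(G)`
is the zero map (equivalently, for all `k ≥ 2` the composite
`MC_{k,l} → MC_{k-1,l} → MC_{k-2,l}` vanishes); hence `(MC_{*,l}(G), ∂)` is a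
chain complex. -/
theorem magDiff_comp_magDiff {V : Type*} [Fintype V] (G : SimpleGraph V) (k l : ℕ) :
    (magDiff G k l).comp (magDiff G (k + 1) l) = 0 :=
  magDiff_comp_magDiff_general G k l

end MagnitudeHomology
end
end

section
/- Let K_n denote the complete graph on n vertices. For every l ≥ 0, MH_{l,l}(K_n) is isomorphic to the free abelian group on the set of (l+1)-tuples (x_0,…,x_l) of vertices of K_n with x_0 ≠ x_1, …, x_{l-1} ≠ x_l (so it has rank n(n−1)^l), and MH_{k,l}(K_n) = 0 whenever k ≠ l. -/
/-!
In `K_n` distinct vertices are at distance `1`, so a tuple `(x₀,…,x_k)` with consecutive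
entries distinct has length exactly `k`. Hence `MC_{k,l}(K_n)` vanishes for `k ≠ l`: the chain
complex `MC_{*,l}(K_n)` is concentrated in degree `l`, where every chain is a cycle and no
chain is a boundary, so `MH_{l,l}(K_n) = MC_{l,l}(K_n)`. The rank is the number of such
tuples: `n` choices for `x₀`, then `n - 1` for each further entry.
-/

noncomputable section

namespace MagnitudeHomology

open Classical

variable {V : Type*} {W : Type*}

/-- The subgroup of cycles: everything in degree `0`, the kernel of `∂` in
positive degrees. -/
def magCycles (G : SimpleGraph V) (l : ℕ) : (k : ℕ) → AddSubgroup (MC G k l)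
  | 0 => ⊤
  | (k + 1) => (magDiff G k l).ker

/-- The boundaries, viewed as a subgroup of the cycles. -/
def magBoundaries (G : SimpleGraph V) (k l : ℕ) : AddSubgroup (magCycles G l k) :=
  ((magDiff G k l).range).addSubgroupOf (magCycles G l k)

/-- Magnitude homology `MH_{k,l}(G) = H_k(MC_{*,l}(G))`. -/
def MH (G : SimpleGraph V) (k l : ℕ) : Type _ :=
  magCycles G l k ⧸ magBoundaries G k l

instance (G : SimpleGraph V) (k l : ℕ) : AddCommGroup (MH G k l) :=
  inferInstanceAs (AddCommGroup (_ ⧸ _))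

/-- The homology class of a chain: its class if it is a cycle, `0` otherwise. -/
def mkMH (G : SimpleGraph V) (k l : ℕ) (z : MC G k l) : MH G k l :=
  if h : z ∈ magCycles G l k then QuotientAddGroup.mk ⟨z, h⟩ else 0

section General

variable (G : SimpleGraph V) {k l : ℕ}

theorem magCycles_succ_eq_top [Subsingleton (MC G k l)] : magCycles G l (k + 1) = ⊤ :=
  (AddSubgroup.eq_top_iff' _).2 fun _ => (magDiff G k l).mem_ker.2 (Subsingleton.elim _ _)

theorem magBoundaries_eq_bot [Subsingleton (MC G (k + 1) l)] : magBoundaries G k l = ⊥ := by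
  rw [eq_bot_iff]
  rintro z ⟨y, hy⟩
  rw [Subsingleton.elim y 0, map_zero] at hy
  exact Subtype.ext hy.symm

theorem subsingleton_MH [Subsingleton (MC G k l)] : Subsingleton (MH G k l) :=
  have : Subsingleton (magCycles G l k) := ⟨fun _ _ => Subtype.ext (Subsingleton.elim _ _)⟩
  (QuotientAddGroup.mk'_surjective (magBoundaries G k l)).subsingleton

def mhEquivMC (hZ : magCycles G l k = ⊤) [Subsingleton (MC G (k + 1) l)] :
    MH G k l ≃+ MC G k l :=
  (QuotientAddGroup.quotientAddEquivOfEq (magBoundaries_eq_bot G)).trans <|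
    QuotientAddGroup.quotientBot.trans <|
      (AddEquiv.addSubgroupCongr hZ).trans AddSubgroup.topEquiv

end General

section CompleteGraph

variable {k l : ℕ}

theorem tupleLen_top {x : Fin (k + 1) → V} (hx : ∀ i : Fin k, x i.castSucc ≠ x i.succ) :
    tupleLen (⊤ : SimpleGraph V) x = k := by
  simp [tupleLen, SimpleGraph.edist_top_of_ne (hx _)]

theorem isMagTuple_top_iff (x : Fin (k + 1) → V) :
    IsMagTuple (⊤ : SimpleGraph V) l x ↔
      (∀ i : Fin k, x i.castSucc ≠ x i.succ) ∧ k = l :=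
  and_congr_right fun hx => by rw [tupleLen_top hx, Nat.cast_inj]

theorem subsingleton_MC_top (h : k ≠ l) : Subsingleton (MC (⊤ : SimpleGraph V) k l) :=
  have : IsEmpty (MagTuple (⊤ : SimpleGraph V) k l) :=
    ⟨fun x => h ((isMagTuple_top_iff x.1).1 x.2).2⟩
  inferInstanceAs (Subsingleton (FreeAbelianGroup _))

theorem magCycles_top_self (l : ℕ) : magCycles (⊤ : SimpleGraph V) l l = ⊤ := by
  cases l with
  | zero => rfl
  | succ k =>
    have := subsingleton_MC_top (V := V) (Nat.ne_add_one k)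
    exact magCycles_succ_eq_top _

def magTupleTopEquiv (l : ℕ) :
    MagTuple (⊤ : SimpleGraph V) l l ≃
      {x : Fin (l + 1) → V // ∀ i : Fin l, x i.castSucc ≠ x i.succ} :=
  Equiv.subtypeEquivRight fun x => by simp [isMagTuple_top_iff]

def mhTopEquiv (l : ℕ) :
    MH (⊤ : SimpleGraph V) l l ≃+
      FreeAbelianGroup {x : Fin (l + 1) → V // ∀ i : Fin l, x i.castSucc ≠ x i.succ} :=
  have := subsingleton_MC_top (V := V) (Nat.succ_ne_self l)
  (mhEquivMC _ (magCycles_top_self l)).trans (FreeAbelianGroup.equivOfEquiv (magTupleTopEquiv l))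

end CompleteGraph

theorem snoc_consecutive_ne_iff {l : ℕ} (x : Fin (l + 1) → V) (y : V) :
    (∀ i : Fin (l + 1), (Fin.snoc x y : Fin (l + 2) → V) i.castSucc ≠
        (Fin.snoc x y : Fin (l + 2) → V) i.succ) ↔
      (∀ i : Fin l, x i.castSucc ≠ x i.succ) ∧ x (Fin.last l) ≠ y := by
  simp [Fin.forall_fin_succ', ← Fin.castSucc_succ]

def consecutiveNeSnocEquiv (l : ℕ) :
    {x : Fin (l + 2) → V // ∀ i : Fin (l + 1), x i.castSucc ≠ x i.succ} ≃
      Σ t : {t : Fin (l + 1) → V // ∀ i : Fin l, t i.castSucc ≠ t i.succ},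
        {y : V // t.1 (Fin.last l) ≠ y} where
  toFun x :=
    have h := (snoc_consecutive_ne_iff (Fin.init x.1) (x.1 (Fin.last _))).1 <| by
      rw [Fin.snoc_init_self]; exact x.2
    ⟨⟨Fin.init x.1, h.1⟩, ⟨x.1 (Fin.last _), h.2⟩⟩
  invFun t := ⟨Fin.snoc t.1.1 t.2.1, (snoc_consecutive_ne_iff _ _).2 ⟨t.1.2, t.2.2⟩⟩
  left_inv x := by simp
  right_inv t := Sigma.subtype_ext (by simp) (by simp)

theorem card_consecutive_ne [Fintype V] (l : ℕ) :
    Fintype.card {x : Fin (l + 1) → V // ∀ i : Fin l, x i.castSucc ≠ x i.succ} =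
      Fintype.card V * (Fintype.card V - 1) ^ l := by
  induction l with
  | zero => simp
  | succ l ih =>
    simp [Fintype.card_congr (consecutiveNeSnocEquiv (V := V) l), ih, Fintype.card_subtype_compl,
      pow_succ, mul_assoc]

theorem finrank_MH_top_self [Fintype V] (l : ℕ) :
    Module.finrank ℤ (MH (⊤ : SimpleGraph V) l l) =
      Fintype.card V * (Fintype.card V - 1) ^ l := by
  rw [((mhTopEquiv l).trans (FreeAbelianGroup.equivFinsupp _)).toIntLinearEquiv.finrank_eq,
    Module.finrank_finsupp_self, card_consecutive_ne]

/-- For the complete graph `K_n` (every pair of distinct vertices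
adjacent): `MH_{l,l}(K_n)` is isomorphic to the free abelian group on `(l+1)`-tuples
of vertices with consecutive entries distinct (hence has rank `n·(n-1)^l`), and
`MH_{k,l}(K_n) = 0` for `k ≠ l`. -/
theorem MH_completeGraph (n : ℕ) :
    (∀ l : ℕ,
        Nonempty (MH (⊤ : SimpleGraph (Fin n)) l l ≃+
          FreeAbelianGroup {x : Fin (l + 1) → Fin n // ∀ i : Fin l, x i.castSucc ≠ x i.succ}) ∧
        Module.finrank ℤ (MH (⊤ : SimpleGraph (Fin n)) l l) = n * (n - 1) ^ l) ∧
      ∀ k l : ℕ, k ≠ l → Subsingleton (MH (⊤ : SimpleGraph (Fin n)) k l) := by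
  refine ⟨fun l => ⟨⟨mhTopEquiv l⟩, ?_⟩, fun k l h => ?_⟩
  · simpa using finrank_MH_top_self (V := Fin n) l
  · have := subsingleton_MC_top (V := Fin n) h
    exact subsingleton_MH _

end MagnitudeHomology
end
end

section
/- For any graphs G and H and every l ≥ 0, the l-th coefficient of the magnitude of the disjoint union is additive: c_l(G ⊔ H) = c_l(G) + c_l(H); equivalently #(G ⊔ H) = #G + #H as formal power series. -/
/-!
In `G ⊔ H` two vertices in different summands are at infinite distance, and two vertices in the
same summand are at the distance they have there (a walk cannot leave its summand). So a tuple of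
finite length lies entirely in `G` or entirely in `H`, its length is computed there, and the
tuples of `G ⊔ H` of each shape `(k, l)` are the disjoint union of those of `G` and of `H`.
-/

namespace SimpleGraph

variable {V V' W : Type*} {G : SimpleGraph V} {G' : SimpleGraph V'} {H : SimpleGraph W}

theorem edist_map_le (f : G →g G') (u v : V) : G'.edist (f u) (f v) ≤ G.edist u v := by
  by_cases h : G.Reachable u v
  · obtain ⟨p, hp⟩ := h.exists_walk_length_eq_edist
    rw [← hp, ← Walk.length_map f]
    exact edist_le _
  · rw [edist_eq_top_of_not_reachable h]
    exact le_top

theorem Iso.edist_eq (f : G ≃g G') (u v : V) : G'.edist (f u) (f v) = G.edist u v :=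
  le_antisymm (edist_map_le f.toHom u v) (by simpa using edist_map_le f.symm.toHom (f u) (f v))

theorem Walk.exists_sum_inl_length_eq {a : V} :
    ∀ {y : V ⊕ W} (p : (G ⊕g H).Walk (.inl a) y),
      ∃ (b : V) (q : G.Walk a b), y = .inl b ∧ q.length = p.length
  | _, .nil => ⟨a, .nil, rfl, rfl⟩
  | _, .cons (v := .inl _) h p =>
    let ⟨b, q, hy, hq⟩ := exists_sum_inl_length_eq p
    ⟨b, .cons (sum_adj_inl.1 h) q, hy, by simp [hq]⟩
  | _, .cons (v := .inr _) h _ => (not_adj_sum_inl_inr _ _ h).elim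

theorem edist_sum_inl (a b : V) : (G ⊕g H).edist (.inl a) (.inl b) = G.edist a b := by
  refine le_antisymm (edist_map_le Embedding.sumInl.toHom a b) (le_iInf fun p => ?_)
  obtain ⟨b', q, hb, hq⟩ := p.exists_sum_inl_length_eq
  cases Sum.inl_injective hb
  exact hq ▸ edist_le q

theorem edist_sum_inr (a b : W) : (G ⊕g H).edist (.inr a) (.inr b) = H.edist a b :=
  (Iso.sumComm.edist_eq (.inr a) (.inr b)).symm.trans (edist_sum_inl a b)

theorem exists_eq_inl_of_reachable_sum {a : V} {z : V ⊕ W}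
    (h : (G ⊕g H).Reachable (.inl a) z) : ∃ b, z = .inl b := by
  rcases z with b | w
  · exact ⟨b, rfl⟩
  · exact (not_reachable_sum_inl_inr a w h).elim

theorem exists_eq_inr_of_reachable_sum {a : W} {z : V ⊕ W}
    (h : (G ⊕g H).Reachable (.inr a) z) : ∃ b, z = .inr b := by
  rcases z with v | b
  · exact (not_reachable_sum_inl_inr v a h.symm).elim
  · exact ⟨b, rfl⟩

end SimpleGraph

noncomputable section

namespace MagnitudeHomology

open Classical

variable {V : Type*} {W : Type*}

/-- The `l`-th coefficient `c_l(G)` of the magnitude power series `#G`. -/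
def magCoeff (G : SimpleGraph V) (l : ℕ) : ℤ :=
  ∑ k ∈ Finset.range (l + 1), (-1 : ℤ) ^ k * (Nat.card (MagTuple G k l) : ℤ)

open SimpleGraph

section DisjointUnion

variable {V' : Type*} {G : SimpleGraph V} {G' : SimpleGraph V'} {H : SimpleGraph W}

theorem reachable_of_tupleLen_ne_top {k : ℕ} {x : Fin (k + 1) → V} (h : tupleLen G x ≠ ⊤)
    (j : Fin (k + 1)) : G.Reachable (x 0) (x j) := by
  induction j using Fin.induction with
  | zero => rfl
  | succ i ih =>
    refine ih.trans (edist_ne_top_iff_reachable.1 (ne_top_of_le_ne_top h ?_))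
    exact Finset.single_le_sum (f := fun i : Fin k => G.edist (x i.castSucc) (x i.succ))
      (fun _ _ => zero_le) (Finset.mem_univ i)

theorem exists_eq_comp_inl_or_inr {k : ℕ} {x : Fin (k + 1) → V ⊕ W}
    (h : tupleLen (G ⊕g H) x ≠ ⊤) : (∃ y, x = Sum.inl ∘ y) ∨ ∃ z, x = Sum.inr ∘ z := by
  have hr := reachable_of_tupleLen_ne_top h
  rcases hx : x 0 with a | a
  · choose y hy using fun j => exists_eq_inl_of_reachable_sum (hx ▸ hr j)
    exact .inl ⟨y, funext hy⟩
  · choose z hz using fun j => exists_eq_inr_of_reachable_sum (hx ▸ hr j)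
    exact .inr ⟨z, funext hz⟩

theorem isMagTuple_comp_iff (f : G ↪g G') (hf : ∀ u v, G'.edist (f u) (f v) = G.edist u v)
    {k l : ℕ} (x : Fin (k + 1) → V) : IsMagTuple G' l (f ∘ x) ↔ IsMagTuple G l x := by
  simp only [IsMagTuple, tupleLen, Function.comp_apply, hf, f.injective.ne_iff]

def MagTuple.map (f : G ↪g G') (hf : ∀ u v, G'.edist (f u) (f v) = G.edist u v) (k l : ℕ) :
    MagTuple G k l → MagTuple G' k l :=
  fun x => ⟨f ∘ x.1, (isMagTuple_comp_iff f hf x.1).2 x.2⟩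

theorem MagTuple.map_injective (f : G ↪g G') (hf : ∀ u v, G'.edist (f u) (f v) = G.edist u v)
    (k l : ℕ) : Function.Injective (MagTuple.map f hf k l) :=
  fun _ _ h => Subtype.ext (f.injective.comp_left (congrArg Subtype.val h))

def magTupleSumEquiv (G : SimpleGraph V) (H : SimpleGraph W) (k l : ℕ) :
    MagTuple G k l ⊕ MagTuple H k l ≃ MagTuple (G ⊕g H) k l :=
  Equiv.ofBijective
    (Sum.elim (MagTuple.map Embedding.sumInl edist_sum_inl k l)
      (MagTuple.map Embedding.sumInr edist_sum_inr k l)) <| by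
    refine ⟨(MagTuple.map_injective _ _ k l).sumElim (MagTuple.map_injective _ _ k l)
      fun y z h => Sum.inl_ne_inr (congrFun (congrArg Subtype.val h) 0), ?_⟩
    rintro ⟨x, hx⟩
    rcases exists_eq_comp_inl_or_inr (hx.2 ▸ ENat.natCast_ne_top l) with ⟨y, rfl⟩ | ⟨z, rfl⟩
    · exact ⟨.inl ⟨y, (isMagTuple_comp_iff Embedding.sumInl edist_sum_inl y).1 hx⟩, rfl⟩
    · exact ⟨.inr ⟨z, (isMagTuple_comp_iff Embedding.sumInr edist_sum_inr z).1 hx⟩, rfl⟩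

theorem card_magTuple_sum [Finite V] [Finite W] (G : SimpleGraph V) (H : SimpleGraph W)
    (k l : ℕ) :
    Nat.card (MagTuple (G ⊕g H) k l) = Nat.card (MagTuple G k l) + Nat.card (MagTuple H k l) := by
  have : Finite (MagTuple G k l) := Subtype.finite
  have : Finite (MagTuple H k l) := Subtype.finite
  rw [← Nat.card_congr (magTupleSumEquiv G H k l), Nat.card_sum]

end DisjointUnion

/-- **Statement 8.** The magnitude coefficients are additive with respect to disjoint
union: `c_l(G ⊔ H) = c_l(G) + c_l(H)` for all `l`; equivalently
`#(G ⊔ H) = #G + #H` as formal power series. -/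
theorem magCoeff_disjoint_union {V W : Type*} [Fintype V] [Fintype W]
    (G : SimpleGraph V) (H : SimpleGraph W) (l : ℕ) :
    magCoeff (G.sum H) l = magCoeff G l + magCoeff H l := by
  simp only [magCoeff, card_magTuple_sum, Nat.cast_add, mul_add, Finset.sum_add_distrib]

end MagnitudeHomology
end
end
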